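/- Let S be a commutative ring, M an S-module, d ≥ 1 and f ≥ −1 integers, and let m and I be ideals of S with I ⊆ m^d. If for some t ≥ 1 one has m^{f+1} I^t M = m^{dt+f+1} M, then m^{f+1} I^{t+1} M = m^{d(t+1)+f+1} M. -/

import Mathlib

/-!
Since `I ⊆ m^d`, one always has `m^a I^k N ⊆ m^(dk+a) N`. For the reverse inclusion at `t + 1`,
write `m^(d(t+1)+a) N = m^d · m^(dt+a) N = m^(d+a) I^t N`, peel off one factor `I` and bound
`m^(d+a) I^(t-1) N ⊆ m^(dt+a) N = m^a I^t N`; multiplying back by `I` gives `m^a I^(t+1) N`.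
-/

namespace Ideal

variable {R : Type*} [CommSemiring R] {m I : Ideal R} {d : ℕ}

theorem pow_mul_pow_le_pow_of_le_pow (hIm : I ≤ m ^ d) (a k : ℕ) :
    m ^ a * I ^ k ≤ m ^ (d * k + a) :=
  calc m ^ a * I ^ k ≤ m ^ a * (m ^ d) ^ k := by gcongr
    _ = m ^ (d * k + a) := by rw [← pow_mul, ← pow_add, add_comm]

variable {M : Type*} [AddCommMonoid M] [Module R M] (N : Submodule R M)

theorem pow_mul_pow_smul_eq_pow_smul_succ (hIm : I ≤ m ^ d) {a t : ℕ} (ht : 1 ≤ t)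
    (h : (m ^ a * I ^ t) • N = m ^ (d * t + a) • N) :
    (m ^ a * I ^ (t + 1)) • N = m ^ (d * (t + 1) + a) • N := by
  obtain ⟨s, rfl⟩ := Nat.exists_eq_add_of_le' ht
  refine le_antisymm (Submodule.smul_mono_left (pow_mul_pow_le_pow_of_le_pow hIm _ _)) ?_
  calc m ^ (d * (s + 1 + 1) + a) • N
      = I • (m ^ (d + a) * I ^ s) • N := by
        rw [show d * (s + 1 + 1) + a = d + (d * (s + 1) + a) by ring, pow_add, mul_smul, ← h,
          ← mul_smul, ← mul_smul]
        congr 1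
        ring
    _ ≤ I • m ^ (d * (s + 1) + a) • N := by
        rw [show d * (s + 1) + a = d * s + (d + a) by ring]
        exact Submodule.smul_mono le_rfl
          (Submodule.smul_mono_left (pow_mul_pow_le_pow_of_le_pow hIm (d + a) s))
    _ = (m ^ a * I ^ (s + 1 + 1)) • N := by
        rw [← h, ← mul_smul]
        congr 1
        ring

end Ideal

theorem stmt_4_general {S : Type*} [CommRing S] {M : Type*} [AddCommGroup M] [Module S M]
    (d : ℕ) (f : ℤ) (hf : -1 ≤ f)
    (m I : Ideal S) (hIm : I ≤ m ^ d)
    (t : ℕ) (ht : 1 ≤ t)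
    (h : (m ^ (f + 1).toNat * I ^ t) • (⊤ : Submodule S M) =
      (m ^ ((d * t : ℤ) + f + 1).toNat) • (⊤ : Submodule S M)) :
    (m ^ (f + 1).toNat * I ^ (t + 1)) • (⊤ : Submodule S M) =
      (m ^ ((d * (t + 1) : ℤ) + f + 1).toNat) • (⊤ : Submodule S M) := by
  have hexp : ∀ k : ℕ, ((d * k : ℕ) + f + 1).toNat = d * k + (f + 1).toNat := fun k ↦ by omega
  push_cast at hexp
  rw [hexp] at h
  rw [show (d * (t + 1) : ℤ) = d * ((t + 1 : ℕ) : ℤ) by push_cast; rfl, hexp]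
  exact Ideal.pow_mul_pow_smul_eq_pow_smul_succ ⊤ hIm ht h

theorem stmt_4 {S : Type*} [CommRing S] {M : Type*} [AddCommGroup M] [Module S M]
    (d : ℕ) (hd : 1 ≤ d) (f : ℤ) (hf : -1 ≤ f)
    (m I : Ideal S) (hIm : I ≤ m ^ d)
    (t : ℕ) (ht : 1 ≤ t)
    (h : (m ^ (f + 1).toNat * I ^ t) • (⊤ : Submodule S M) =
      (m ^ ((d * t : ℤ) + f + 1).toNat) • (⊤ : Submodule S M)) :
    (m ^ (f + 1).toNat * I ^ (t + 1)) • (⊤ : Submodule S M) =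
      (m ^ ((d * (t + 1) : ℤ) + f + 1).toNat) • (⊤ : Submodule S M) :=
  stmt_4_general d f hf m I hIm t ht h
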